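/- Let ℭ be a class of dynamic operators each satisfying (DP1), and let 𝔐 be a class of preference models over which every member of ℭ is closed. Then for every φ ∈ L_0 and every ξ ∈ L_≤(★), the following schemata are valid in ⟨𝔐, ℭ⟩: (1) [★φ][≤]ξ → (φ → [≤](φ → [★φ]ξ)); (2) [★φ][<]ξ → (φ → [<](φ → [★φ]ξ)); (3) [≤][★φ]ξ → (φ → [★φ][≤](φ → ξ)); (4) [<][★φ]ξ → (φ → [★φ][<](φ → ξ)). -/

import Mathlib

inductive PForm (P : Type) : Type
  | atom : P → PForm P
  | neg  : PForm P → PForm P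
  | and  : PForm P → PForm P → PForm P

inductive DForm (P : Type) : Type
  | atom  : P → DForm P
  | neg   : DForm P → DForm P
  | and   : DForm P → DForm P → DForm P
  | all   : DForm P → DForm P
  | boxLe : DForm P → DForm P
  | boxLt : DForm P → DForm P
  | dyn   : PForm P → DForm P → DForm P

structure PrefModel (P : Type) where
  W : Type
  le : W → W → Prop
  refl : ∀ w, le w w
  trans : ∀ w₁ w₂ w₃, le w₁ w₂ → le w₂ w₃ → le w₁ w₃
  wf : WellFounded (fun w w' => le w w' ∧ ¬ le w' w)
  val : P → Set W

namespace PrefModel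
variable {P : Type}
def lt (M : PrefModel P) (w w' : M.W) : Prop := M.le w w' ∧ ¬ M.le w' w
def Min (M : PrefModel P) (S : Set M.W) : Set M.W :=
  {w | w ∈ S ∧ ¬ ∃ w' ∈ S, M.le w' w ∧ ¬ M.le w w'}
end PrefModel

def psat {P : Type} (M : PrefModel P) : PForm P → M.W → Prop
  | .atom p, w => w ∈ M.val p
  | .neg φ, w => ¬ psat M φ w
  | .and φ ψ, w => psat M φ w ∧ psat M ψ w

def pext {P : Type} (M : PrefModel P) (φ : PForm P) : Set M.W := {w | psat M φ w}

structure DynOp (P : Type) where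
  rel : (M : PrefModel P) → PForm P → M.W → M.W → Prop
  refl : ∀ M φ w, rel M φ w w
  trans : ∀ M φ w₁ w₂ w₃, rel M φ w₁ w₂ → rel M φ w₂ w₃ → rel M φ w₁ w₃
  wf : ∀ M φ, WellFounded (fun w w' => rel M φ w w' ∧ ¬ rel M φ w' w)

def DynOp.apply {P : Type} (s : DynOp P) (M : PrefModel P) (φ : PForm P) : PrefModel P where
  W := M.W
  le := s.rel M φ
  refl := s.refl M φ
  trans := s.trans M φ
  wf := s.wf M φ
  val := M.val

def DynOp.srel {P : Type} (s : DynOp P) (M : PrefModel P) (φ : PForm P) (w w' : M.W) : Prop :=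
  s.rel M φ w w' ∧ ¬ s.rel M φ w' w

def PForm.toD {P : Type} : PForm P → DForm P
  | .atom p => .atom p
  | .neg φ => .neg φ.toD
  | .and φ ψ => .and φ.toD ψ.toD

namespace DForm
variable {P : Type}
def imp (ξ ψ : DForm P) : DForm P := .neg (.and ξ (.neg ψ))
def iff (ξ ψ : DForm P) : DForm P := .and (imp ξ ψ) (imp ψ ξ)
def or (ξ ψ : DForm P) : DForm P := .neg (.and (.neg ξ) (.neg ψ))
def exi (ξ : DForm P) : DForm P := .neg (.all (.neg ξ))
def diaLt (ξ : DForm P) : DForm P := .neg (.boxLt (.neg ξ))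
def mu (ξ : DForm P) : DForm P := .and ξ (.neg (diaLt ξ))
def bel (ψ χ : DForm P) : DForm P := .all (imp (mu χ) ψ)
end DForm

def dsat {P : Type} (s : DynOp P) : DForm P → (M : PrefModel P) → M.W → Prop
  | .atom p, M, w => w ∈ M.val p
  | .neg ξ, M, w => ¬ dsat s ξ M w
  | .and ξ₁ ξ₂, M, w => dsat s ξ₁ M w ∧ dsat s ξ₂ M w
  | .all ξ, M, _ => ∀ w', dsat s ξ M w'
  | .boxLe ξ, M, w => ∀ w', M.le w' w → dsat s ξ M w'
  | .boxLt ξ, M, w => ∀ w', M.lt w' w → dsat s ξ M w'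
  | .dyn φ ξ, M, w => dsat s ξ (s.apply M φ) w

def ClosedOver {P : Type} (s : DynOp P) (𝔐 : Set (PrefModel P)) : Prop :=
  ∀ M ∈ 𝔐, ∀ φ : PForm P, s.apply M φ ∈ 𝔐

/-- `★` satisfies (DP1): for all `w, w' ∈ ⟦φ⟧`, `w ≤_{★φ} w'` iff `w ≤ w'`. -/
def SatDP1 {P : Type} (s : DynOp P) : Prop :=
  ∀ (M : PrefModel P) (φ : PForm P) (w w' : M.W),
    psat M φ w → psat M φ w' → (s.rel M φ w w' ↔ M.le w w')

/-! By (DP1), on `⟦φ⟧` the updated order `≤_{★φ}` and its strict part agree with `≤` and `<`, and the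
truth of the propositional `φ` is unaffected by the update; each schema transports a box across
this agreement, guarded by `φ` at both ends. -/

@[simp]
lemma DynOp.psat_apply {P : Type} (s : DynOp P) (M : PrefModel P) (φ ψ : PForm P)
    (w : (s.apply M φ).W) : psat (s.apply M φ) ψ w ↔ psat M ψ w := by
  induction ψ with
  | atom p => rfl
  | neg ψ ih => exact not_congr ih
  | and ψ χ ih₁ ih₂ => exact and_congr ih₁ ih₂

section Semantics

variable {P : Type} (s : DynOp P) (M : PrefModel P) (w : M.W)

@[simp]
lemma dsat_toD (φ : PForm P) : dsat s φ.toD M w ↔ psat M φ w := by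
  induction φ with
  | atom p => rfl
  | neg φ ih => exact not_congr ih
  | and φ ψ ih₁ ih₂ => exact and_congr ih₁ ih₂

@[simp]
lemma dsat_imp (ξ ψ : DForm P) : dsat s (ξ.imp ψ) M w ↔ (dsat s ξ M w → dsat s ψ M w) := by
  simp only [DForm.imp, dsat, not_and, not_not]

end Semantics

namespace SatDP1

variable {P : Type} {s : DynOp P} {M : PrefModel P} {φ : PForm P} {w w' : M.W}

lemma apply_le_iff (h : SatDP1 s) (hw : psat M φ w) (hw' : psat M φ w') :
    (s.apply M φ).le w w' ↔ M.le w w' :=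
  h M φ w w' hw hw'

lemma apply_lt_iff (h : SatDP1 s) (hw : psat M φ w) (hw' : psat M φ w') :
    (s.apply M φ).lt w w' ↔ M.lt w w' :=
  and_congr (h.apply_le_iff hw hw') (not_congr (h.apply_le_iff hw' hw))

end SatDP1

theorem dp1_validities_general {P : Type} (𝔐 : Set (PrefModel P)) (ℭ : Set (DynOp P))
    (hdp1 : ∀ s ∈ ℭ, SatDP1 s) :
    ∀ s ∈ ℭ, ∀ M ∈ 𝔐, ∀ (φ : PForm P) (ξ : DForm P), ∀ w : M.W,
      dsat s ((DForm.dyn φ (.boxLe ξ)).imp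
        (φ.toD.imp (.boxLe (φ.toD.imp (.dyn φ ξ))))) M w ∧
      dsat s ((DForm.dyn φ (.boxLt ξ)).imp
        (φ.toD.imp (.boxLt (φ.toD.imp (.dyn φ ξ))))) M w ∧
      dsat s ((DForm.boxLe (.dyn φ ξ)).imp
        (φ.toD.imp (.dyn φ (.boxLe (φ.toD.imp ξ))))) M w ∧
      dsat s ((DForm.boxLt (.dyn φ ξ)).imp
        (φ.toD.imp (.dyn φ (.boxLt (φ.toD.imp ξ))))) M w := by
  intro s hs M _ φ ξ w
  have hdp := hdp1 s hs
  simp only [dsat_imp, dsat, dsat_toD, DynOp.psat_apply]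
  refine ⟨?_, ?_, ?_, ?_⟩
  all_goals intro h hφ w' hw'w hφ'
  · exact h w' ((hdp.apply_le_iff hφ' hφ).2 hw'w)
  · exact h w' ((hdp.apply_lt_iff hφ' hφ).2 hw'w)
  · exact h w' ((hdp.apply_le_iff hφ' hφ).1 hw'w)
  · exact h w' ((hdp.apply_lt_iff hφ' hφ).1 hw'w)

theorem dp1_validities {P : Type} (𝔐 : Set (PrefModel P)) (ℭ : Set (DynOp P))
    (hclosed : ∀ s ∈ ℭ, ClosedOver s 𝔐) (hdp1 : ∀ s ∈ ℭ, SatDP1 s) :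
    ∀ s ∈ ℭ, ∀ M ∈ 𝔐, ∀ (φ : PForm P) (ξ : DForm P), ∀ w : M.W,
      dsat s ((DForm.dyn φ (.boxLe ξ)).imp
        (φ.toD.imp (.boxLe (φ.toD.imp (.dyn φ ξ))))) M w ∧
      dsat s ((DForm.dyn φ (.boxLt ξ)).imp
        (φ.toD.imp (.boxLt (φ.toD.imp (.dyn φ ξ))))) M w ∧
      dsat s ((DForm.boxLe (.dyn φ ξ)).imp
        (φ.toD.imp (.dyn φ (.boxLe (φ.toD.imp ξ))))) M w ∧
      dsat s ((DForm.boxLt (.dyn φ ξ)).imp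
        (φ.toD.imp (.dyn φ (.boxLt (φ.toD.imp ξ))))) M w :=
  dp1_validities_general 𝔐 ℭ hdp1
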